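/- Let K be a simplicial complex on Fin n, σ a permutation of Fin n, and d ≥ 1. Let f : C_d(K) → C_d(K) be componentwise with odd components f_t (t ∈ X_d(K)), and let f̃ : C_d(σ(K)) → C_d(σ(K)) be componentwise with components f̃_{t.image σ} = f_t for all t ∈ X_d(K). Similarly let g : C_{d−1}(K) → C_{d−1}(K) be componentwise with odd components g_e, and g̃ : C_{d−1}(σ(K)) → C_{d−1}(σ(K)) componentwise with g̃_{e.image σ} = g_e. Then: (i) T^{d−1}_σ ∘ (B_d^K ∘ f ∘ (B_d^K)ᵀ) = (B_d^{σ(K)} ∘ f̃ ∘ (B_d^{σ(K)})ᵀ) ∘ T^{d−1}_σ; and (ii) T^d_σ ∘ ((B_d^K)ᵀ ∘ g ∘ B_d^K) = ((B_d^{σ(K)})ᵀ ∘ g̃ ∘ B_d^{σ(K)}) ∘ T^d_σ. In particular, a different labelling of the vertices gives conjugate vector fields. -/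
import Mathlib


open Finset

/-- A simplicial complex on the vertex set `Fin n`: a set of nonempty finsets closed under
taking nonempty subsets. -/
def IsSimplicialCx {n : ℕ} (𝒦 : Set (Finset (Fin n))) : Prop :=
  (∀ s ∈ 𝒦, s.Nonempty) ∧ ∀ s ∈ 𝒦, ∀ t ⊆ s, t.Nonempty → t ∈ 𝒦

/-- `X_d(𝒦)`: the `d`-simplices of `𝒦`, i.e. the members of `𝒦` of cardinality `d + 1`. -/
abbrev Cell (n d : ℕ) (𝒦 : Set (Finset (Fin n))) : Type :=
  {s : Finset (Fin n) // s ∈ 𝒦 ∧ s.card = d + 1}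

noncomputable instance (n d : ℕ) (𝒦 : Set (Finset (Fin n))) : Fintype (Cell n d 𝒦) :=
  Fintype.ofFinite _

/-- The incidence sign `I_e^t`: equals `(-1)^k` if `e = t.erase i_k` where `i_k` is the
`(k+1)`-st smallest element of `t`, and `0` otherwise. -/
noncomputable def isign {n : ℕ} (t e : Finset (Fin n)) : ℤ :=
  ∑ k : Fin t.card, if e = t.erase (t.orderIsoOfFin rfl k : Fin n) then (-1) ^ (k : ℕ) else 0

/-- The boundary map `B_{d+1} : C_{d+1}(𝒦) → C_d(𝒦)`, `(B x)_e = Σ_t I_e^t x_t`. -/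
noncomputable def bMap {n : ℕ} (𝒦 : Set (Finset (Fin n))) (d : ℕ)
    (x : Cell n (d + 1) 𝒦 → ℝ) : Cell n d 𝒦 → ℝ :=
  fun e => ∑ t : Cell n (d + 1) 𝒦, (isign t.1 e.1 : ℝ) * x t

/-- The transpose (adjoint) boundary map `B_{d+1}ᵀ : C_d(𝒦) → C_{d+1}(𝒦)`,
`(Bᵀ y)_t = Σ_e I_e^t y_e`. -/
noncomputable def bMapT {n : ℕ} (𝒦 : Set (Finset (Fin n))) (d : ℕ)
    (y : Cell n d 𝒦 → ℝ) : Cell n (d + 1) 𝒦 → ℝ :=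
  fun t => ∑ e : Cell n d 𝒦, (isign t.1 e.1 : ℝ) * y e

/-- The permutation of `Fin A.card` induced by a permutation `σ` of `Fin n` on a finset `A`:
`k ↦ e_{A.image σ}⁻¹ (σ (e_A k))`, where `e_A` enumerates `A` in increasing order. -/
noncomputable def relPerm {n : ℕ} (σ : Equiv.Perm (Fin n)) (A : Finset (Fin n)) :
    Equiv.Perm (Fin A.card) :=
  ((A.orderIsoOfFin rfl).toEquiv.trans
      ((σ : Fin n ≃ Fin n).subtypeEquiv (p := (· ∈ A)) (q := (· ∈ A.image ⇑σ))
        (fun a => ⟨fun ha => Finset.mem_image_of_mem σ ha,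
          fun h => by
            obtain ⟨a', ha', h'⟩ := Finset.mem_image.mp h
            rwa [← σ.injective h']⟩))).trans
    ((A.image ⇑σ).orderIsoOfFin
      (Finset.card_image_of_injective A σ.injective)).toEquiv.symm

/-- `sgn(A, σ) ∈ {1, -1}`: the sign of the permutation by which `σ` rearranges the elements
of `A`. -/
noncomputable def sgnA {n : ℕ} (σ : Equiv.Perm (Fin n)) (A : Finset (Fin n)) : ℤ :=
  ((Equiv.Perm.sign (relPerm σ A) : ℤˣ) : ℤ)

/-- The signed relabelling map `T^d_σ : C_d(𝒦) → C_d(σ(𝒦))`, the linear map determined by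
`(T^d_σ x)_{A.image σ} = sgn(A, σ) · x_A` for all `A ∈ X_d(𝒦)`. -/
noncomputable def Tmap {n : ℕ} (σ : Equiv.Perm (Fin n)) (𝒦 : Set (Finset (Fin n))) (d : ℕ)
    (x : Cell n d 𝒦 → ℝ) : Cell n d (Finset.image ⇑σ '' 𝒦) → ℝ :=
  fun s => ∑ A : Cell n d 𝒦, if s.1 = A.1.image ⇑σ then (sgnA σ A.1 : ℝ) * x A else 0
open Finset

lemma sign_succAbove_rel {m : ℕ} (π : Equiv.Perm (Fin (m+1))) (π' : Equiv.Perm (Fin m))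
    (k : Fin (m+1)) (h : ∀ j, π (k.succAbove j) = (π k).succAbove (π' j)) :
    ((Equiv.Perm.sign π : ℤˣ) : ℤ)
      = (-1) ^ ((k:ℕ) + ((π k : Fin (m+1)) : ℕ)) * ((Equiv.Perm.sign π' : ℤˣ) : ℤ) := by
  have hρ : (π k).cycleRange * π * (k.cycleRange)⁻¹ = Equiv.Perm.decomposeFin.symm (0, π') := by
    ext i
    refine Fin.cases ?_ (fun j => ?_) i
    · simp [Equiv.Perm.mul_apply, Equiv.Perm.inv_def, Fin.cycleRange_symm_zero,
        Fin.cycleRange_self, Equiv.Perm.decomposeFin_symm_apply_zero]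
    · simp only [Equiv.Perm.mul_apply, Equiv.Perm.inv_def, Fin.cycleRange_symm_succ, h,
        Fin.cycleRange_succAbove, Equiv.Perm.decomposeFin_symm_apply_succ, Equiv.swap_self,
        Equiv.refl_apply]
  have h1 := congrArg (fun ρ => ((Equiv.Perm.sign ρ : ℤˣ) : ℤ)) hρ
  simp only [map_mul, map_inv, Fin.sign_cycleRange, Equiv.Perm.decomposeFin.symm_sign,
    if_true, inv_pow, inv_neg, inv_one, one_mul, Units.val_mul, Units.val_pow_eq_pow_val,
    Units.val_neg, Units.val_one] at h1
  rw [← h1, pow_add]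
  have hsq : ∀ a : ℕ, ((-1:ℤ)) ^ a * (-1) ^ a = 1 := fun a => by
    rw [← mul_pow]; norm_num
  calc ((Equiv.Perm.sign π : ℤˣ) : ℤ)
      = (((-1:ℤ))^((π k : Fin (m+1)):ℕ) * (-1)^((π k : Fin (m+1)):ℕ))
        * (((-1:ℤ))^((k:ℕ)) * (-1)^((k:ℕ))) * ((Equiv.Perm.sign π : ℤˣ) : ℤ) := by
        rw [hsq, hsq]; ring
    _ = (-1) ^ ((k:ℕ)) * (-1) ^ (((π k : Fin (m+1)):ℕ)) *
        ((-1) ^ (((π k : Fin (m+1)):ℕ)) * ((Equiv.Perm.sign π : ℤˣ) : ℤ) * (-1) ^ ((k:ℕ))) := by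
        ring

lemma orderEmbOfFin_cast {α : Type*} [LinearOrder α] {s : Finset α} {a b : ℕ}
    (ha : s.card = a) (hb : s.card = b) (i : Fin b) :
    s.orderEmbOfFin ha (Fin.cast (hb.symm.trans ha) i) = s.orderEmbOfFin hb i := by
  exact congrFun (Finset.orderEmbOfFin_unique hb
    (f := fun j => s.orderEmbOfFin ha (Fin.cast (hb.symm.trans ha) j))
    (fun j => Finset.orderEmbOfFin_mem s ha _)
    (fun x y hxy => (s.orderEmbOfFin ha).strictMono (by simpa using hxy))) i

lemma orderEmbOfFin_erase {n m : ℕ} (t : Finset (Fin n)) (ht : t.card = m + 1)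
    (k : Fin (m + 1)) (he : (t.erase (t.orderEmbOfFin ht k)).card = m) (j : Fin m) :
    (t.erase (t.orderEmbOfFin ht k)).orderEmbOfFin he j = t.orderEmbOfFin ht (k.succAbove j) := by
  refine congrFun (Finset.orderEmbOfFin_unique he
    (f := fun j => t.orderEmbOfFin ht (k.succAbove j)) (fun j => ?_) (fun x y hxy => ?_)).symm j
  · exact Finset.mem_erase.mpr ⟨(t.orderEmbOfFin ht).injective.ne (Fin.succAbove_ne k j),
      Finset.orderEmbOfFin_mem t ht _⟩
  · exact (t.orderEmbOfFin ht).strictMono (Fin.succAbove_lt_succAbove_iff.mpr hxy)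

lemma orderEmbOfFin_congr {α : Type*} [LinearOrder α] {s s' : Finset α} (h : s = s')
    {m : ℕ} (hs : s.card = m) (hs' : s'.card = m) (i : Fin m) :
    s.orderEmbOfFin hs i = s'.orderEmbOfFin hs' i := by subst h; rfl

lemma relPerm_apply {n : ℕ} (σ : Equiv.Perm (Fin n)) (A : Finset (Fin n)) (k : Fin A.card) :
    (A.image ⇑σ).orderEmbOfFin (Finset.card_image_of_injective A σ.injective) (relPerm σ A k)
      = σ (A.orderEmbOfFin rfl k) := by
  rw [← Finset.coe_orderIsoOfFin_apply, ← Finset.coe_orderIsoOfFin_apply]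
  exact congrArg Subtype.val ((((A.image ⇑σ).orderIsoOfFin
    (Finset.card_image_of_injective A σ.injective))).toEquiv.apply_symm_apply _)

noncomputable def relPerm' {n m : ℕ} (σ : Equiv.Perm (Fin n)) (A : Finset (Fin n))
    (hA : A.card = m) : Equiv.Perm (Fin m) :=
  (finCongr hA).permCongr (relPerm σ A)

lemma sgnA_eq {n m : ℕ} (σ : Equiv.Perm (Fin n)) (A : Finset (Fin n)) (hA : A.card = m) :
    sgnA σ A = ((Equiv.Perm.sign (relPerm' σ A hA) : ℤˣ) : ℤ) := by
  rw [relPerm', Equiv.Perm.sign_permCongr, sgnA]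

lemma relPerm'_apply {n m : ℕ} (σ : Equiv.Perm (Fin n)) (A : Finset (Fin n))
    (hA : A.card = m) (hA2 : (A.image ⇑σ).card = m) (k : Fin m) :
    (A.image ⇑σ).orderEmbOfFin hA2 (relPerm' σ A hA k) = σ (A.orderEmbOfFin hA k) := by
  have h' : (A.image ⇑σ).card = A.card := Finset.card_image_of_injective A σ.injective
  calc (A.image ⇑σ).orderEmbOfFin hA2 (relPerm' σ A hA k)
      = (A.image ⇑σ).orderEmbOfFin hA2
          (Fin.cast (h'.symm.trans hA2) (relPerm σ A (Fin.cast hA.symm k))) := rfl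
    _ = (A.image ⇑σ).orderEmbOfFin h' (relPerm σ A (Fin.cast hA.symm k)) :=
        orderEmbOfFin_cast hA2 h' _
    _ = σ (A.orderEmbOfFin rfl (Fin.cast hA.symm k)) := relPerm_apply σ A _
    _ = σ (A.orderEmbOfFin hA k) := congrArg σ (orderEmbOfFin_cast rfl hA k)

lemma isign_eq {n : ℕ} (t s : Finset (Fin n)) {m : ℕ} (ht : t.card = m) :
    isign t s = ∑ k : Fin m, if s = t.erase (t.orderEmbOfFin ht k) then (-1) ^ (k : ℕ) else 0 := by
  rw [isign, ← Equiv.sum_comp (finCongr ht.symm)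
    (fun k => if s = t.erase ((t.orderIsoOfFin rfl k : _) : Fin n) then ((-1:ℤ)) ^ (k : ℕ) else 0)]
  refine Finset.sum_congr rfl fun k _ => ?_
  rw [Finset.coe_orderIsoOfFin_apply,
    show t.orderEmbOfFin rfl (finCongr ht.symm k) = t.orderEmbOfFin ht k from
      orderEmbOfFin_cast rfl ht k]
  simp

lemma isign_image {n : ℕ} (σ : Equiv.Perm (Fin n)) (t s : Finset (Fin n)) (m : ℕ)
    (ht : t.card = m + 1) (hs : s.card = m) :
    isign (t.image ⇑σ) (s.image ⇑σ) = sgnA σ t * sgnA σ s * isign t s := by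
  have ht' : (t.image ⇑σ).card = m + 1 := by
    rw [Finset.card_image_of_injective t σ.injective, ht]
  have hs' : (s.image ⇑σ).card = m := by
    rw [Finset.card_image_of_injective s σ.injective, hs]
  by_cases hsub : s ⊆ t
  case neg =>
    have z1 : isign t s = 0 := by
      rw [isign_eq t s ht]
      refine Finset.sum_eq_zero fun k _ => ?_
      rw [if_neg]; rintro rfl; exact hsub (Finset.erase_subset _ _)
    have z2 : isign (t.image ⇑σ) (s.image ⇑σ) = 0 := by
      rw [isign_eq _ _ ht']
      refine Finset.sum_eq_zero fun k _ => ?_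
      rw [if_neg]
      intro hEq
      exact hsub ((Finset.image_subset_image_iff σ.injective).mp
        (hEq ▸ Finset.erase_subset _ _))
    rw [z1, z2]; ring
  case pos =>
    obtain ⟨a, hat⟩ : ∃ a, t \ s = {a} := by
      refine Finset.card_eq_one.mp ?_
      rw [Finset.card_sdiff_of_subset hsub, ht, hs]; simp
    have hamem : a ∈ t := by
      have : a ∈ t \ s := hat ▸ Finset.mem_singleton_self a
      exact (Finset.mem_sdiff.mp this).1
    have hse : s = t.erase a := by
      rw [Finset.erase_eq, ← hat, Finset.sdiff_sdiff_self_left,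
        Finset.inter_eq_right.mpr hsub]
    obtain ⟨k₀, hk₀⟩ : ∃ k₀, t.orderEmbOfFin ht k₀ = a := by
      have h1 := Finset.range_orderEmbOfFin t ht
      have h2 : a ∈ Set.range (t.orderEmbOfFin ht) := by rw [h1]; exact_mod_cast hamem
      exact h2
    have himg : (t.image ⇑σ).erase (σ a) = s.image ⇑σ := by
      rw [← Finset.image_erase σ.injective, ← hse]
    have hembk₀ : (t.image ⇑σ).orderEmbOfFin ht' (relPerm' σ t ht k₀) = σ a := by
      rw [relPerm'_apply σ t ht ht' k₀, hk₀]
    have compat : ∀ j : Fin m, relPerm' σ t ht (k₀.succAbove j)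
        = (relPerm' σ t ht k₀).succAbove (relPerm' σ s hs j) := by
      intro j
      apply ((t.image ⇑σ).orderEmbOfFin ht').injective
      have heA : ((t.image ⇑σ).erase
          ((t.image ⇑σ).orderEmbOfFin ht' (relPerm' σ t ht k₀))).card = m := by
        rw [Finset.card_erase_of_mem (Finset.orderEmbOfFin_mem _ _ _), ht']
        omega
      have hsetEq : (t.image ⇑σ).erase
          ((t.image ⇑σ).orderEmbOfFin ht' (relPerm' σ t ht k₀)) = s.image ⇑σ := by
        rw [hembk₀, himg]
      have heC : (t.erase (t.orderEmbOfFin ht k₀)).card = m := by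
        rw [Finset.card_erase_of_mem (Finset.orderEmbOfFin_mem _ _ _), ht]
        omega
      have hseC : t.erase (t.orderEmbOfFin ht k₀) = s := by rw [hk₀, ← hse]
      calc ((t.image ⇑σ).orderEmbOfFin ht') (relPerm' σ t ht (k₀.succAbove j))
          = σ (t.orderEmbOfFin ht (k₀.succAbove j)) := relPerm'_apply σ t ht ht' _
        _ = σ ((t.erase (t.orderEmbOfFin ht k₀)).orderEmbOfFin heC j) := by
            rw [orderEmbOfFin_erase t ht k₀ heC j]
        _ = σ (s.orderEmbOfFin hs j) := congrArg σ (orderEmbOfFin_congr hseC heC hs j)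
        _ = (s.image ⇑σ).orderEmbOfFin hs' (relPerm' σ s hs j) :=
            (relPerm'_apply σ s hs hs' j).symm
        _ = ((t.image ⇑σ).erase
              ((t.image ⇑σ).orderEmbOfFin ht' (relPerm' σ t ht k₀))).orderEmbOfFin heA
              (relPerm' σ s hs j) :=
            (orderEmbOfFin_congr hsetEq heA hs' _).symm
        _ = ((t.image ⇑σ).orderEmbOfFin ht')
              ((relPerm' σ t ht k₀).succAbove (relPerm' σ s hs j)) :=
            orderEmbOfFin_erase _ ht' _ heA _
    have hsign := sign_succAbove_rel (relPerm' σ t ht) (relPerm' σ s hs) k₀ compat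
    have hits : isign t s = (-1) ^ (k₀ : ℕ) := by
      rw [isign_eq t s ht]
      rw [Finset.sum_eq_single_of_mem k₀ (Finset.mem_univ _)]
      · rw [if_pos (by rw [hk₀, ← hse])]
      · intro k _ hk
        rw [if_neg]
        intro hEq
        apply hk
        apply (t.orderEmbOfFin ht).injective
        rw [hk₀]
        exact ((Finset.erase_inj t hamem).mp (by rw [← hEq, hse])).symm
    have hits' : isign (t.image ⇑σ) (s.image ⇑σ)
        = (-1) ^ ((relPerm' σ t ht k₀ : Fin (m+1)) : ℕ) := by
      rw [isign_eq _ _ ht']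
      rw [Finset.sum_eq_single_of_mem (relPerm' σ t ht k₀) (Finset.mem_univ _)]
      · rw [if_pos (by rw [hembk₀, himg])]
      · intro k _ hk
        rw [if_neg]
        intro hEq
        apply hk
        apply ((t.image ⇑σ).orderEmbOfFin ht').injective
        rw [hembk₀]
        have hσa : σ a ∈ t.image ⇑σ := Finset.mem_image_of_mem _ hamem
        exact ((Finset.erase_inj (t.image ⇑σ) hσa).mp (by rw [← hEq, ← himg])).symm
    rw [hits, hits', sgnA_eq σ t ht, sgnA_eq σ s hs, hsign, pow_add]
    have h1 : ((-1:ℤ)) ^ (k₀:ℕ) * (-1) ^ (k₀:ℕ) = 1 := by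
      rw [← mul_pow]; norm_num
    have hs2 : ((Equiv.Perm.sign (relPerm' σ s hs) : ℤˣ) : ℤ)
        * ((Equiv.Perm.sign (relPerm' σ s hs) : ℤˣ) : ℤ) = 1 := by
      rw [← Units.val_mul, Int.units_mul_self, Units.val_one]
    linear_combination (-(((-1:ℤ)) ^ (((relPerm' σ t ht k₀ : Fin (m+1))) : ℕ) *
      ((Equiv.Perm.sign (relPerm' σ s hs) : ℤˣ) : ℤ) *
      ((Equiv.Perm.sign (relPerm' σ s hs) : ℤˣ) : ℤ))) * h1 +
      (-(((-1:ℤ)) ^ (((relPerm' σ t ht k₀ : Fin (m+1))) : ℕ))) * hs2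

lemma sgnA_sq {n : ℕ} (σ : Equiv.Perm (Fin n)) (A : Finset (Fin n)) :
    sgnA σ A * sgnA σ A = 1 := by
  rw [sgnA, ← Units.val_mul, Int.units_mul_self, Units.val_one]

lemma sgnA_pm {n : ℕ} (σ : Equiv.Perm (Fin n)) (A : Finset (Fin n)) :
    sgnA σ A = 1 ∨ sgnA σ A = -1 := by
  rw [sgnA]
  rcases Int.units_eq_one_or (Equiv.Perm.sign (relPerm σ A)) with h | h <;> rw [h] <;> simp

noncomputable def cellEquiv {n : ℕ} (σ : Equiv.Perm (Fin n)) (𝒦 : Set (Finset (Fin n)))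
    (d : ℕ) : Cell n d 𝒦 ≃ Cell n d (Finset.image ⇑σ '' 𝒦) :=
  Equiv.ofBijective
    (fun A => ⟨A.1.image ⇑σ, ⟨A.1, A.2.1, rfl⟩, by
      rw [Finset.card_image_of_injective _ σ.injective]; exact A.2.2⟩)
    ⟨fun A B hAB => Subtype.ext (Finset.image_injective σ.injective
        (congrArg Subtype.val hAB)),
      fun s => by
        obtain ⟨B, hB, hBs⟩ := s.2.1
        refine ⟨⟨B, hB, ?_⟩, Subtype.ext ?_⟩
        · have := s.2.2
          rw [← hBs, Finset.card_image_of_injective _ σ.injective] at this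
          exact this
        · exact hBs⟩

lemma cellEquiv_coe {n : ℕ} (σ : Equiv.Perm (Fin n)) (𝒦 : Set (Finset (Fin n))) (d : ℕ)
    (A : Cell n d 𝒦) : (cellEquiv σ 𝒦 d A).1 = A.1.image ⇑σ := rfl

lemma Tmap_apply {n : ℕ} (σ : Equiv.Perm (Fin n)) (𝒦 : Set (Finset (Fin n))) (d : ℕ)
    (x : Cell n d 𝒦 → ℝ) (A : Cell n d 𝒦) :
    Tmap σ 𝒦 d x (cellEquiv σ 𝒦 d A) = (sgnA σ A.1 : ℝ) * x A := by
  rw [Tmap, Finset.sum_eq_single_of_mem A (Finset.mem_univ _)]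
  · rw [if_pos (cellEquiv_coe σ 𝒦 d A)]
  · intro B _ hBA
    rw [if_neg]
    intro hEq
    rw [cellEquiv_coe] at hEq
    exact hBA (Subtype.ext (Finset.image_injective σ.injective hEq)).symm

/-- **Different labellings give conjugate vector fields.**  For a simplicial complex `𝒦`, a
permutation `σ` of the vertices and `d = e + 1 ≥ 1`, let `f` (resp. `g`) be componentwise with
odd components `F t` on `C_d(𝒦)` (resp. `G s` on `C_{d-1}(𝒦)`), and let `f̃`, `g̃` be the
corresponding componentwise maps on `C_d(σ(𝒦))`, `C_{d-1}(σ(𝒦))` with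
`f̃_{t.image σ} = f_t`, `g̃_{s.image σ} = g_s`.  Then
(i) `T^{d-1}_σ ∘ (B_d ∘ f ∘ B_dᵀ) = (B̃_d ∘ f̃ ∘ B̃_dᵀ) ∘ T^{d-1}_σ`, and
(ii) `T^d_σ ∘ (B_dᵀ ∘ g ∘ B_d) = (B̃_dᵀ ∘ g̃ ∘ B̃_d) ∘ T^d_σ`. -/
theorem relabelling_conjugacy {n : ℕ} (𝒦 : Set (Finset (Fin n)))
    (hK : IsSimplicialCx 𝒦) (σ : Equiv.Perm (Fin n)) (e : ℕ)
    (F : Cell n (e + 1) 𝒦 → ℝ → ℝ) (hFodd : ∀ t r, F t (-r) = -F t r)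
    (F' : Cell n (e + 1) (Finset.image ⇑σ '' 𝒦) → ℝ → ℝ)
    (hF' : ∀ (t : Cell n (e + 1) 𝒦) (h : t.1.image ⇑σ ∈ Finset.image ⇑σ '' 𝒦)
      (hc : (t.1.image ⇑σ).card = e + 1 + 1), F' ⟨t.1.image ⇑σ, h, hc⟩ = F t)
    (G : Cell n e 𝒦 → ℝ → ℝ) (hGodd : ∀ s r, G s (-r) = -G s r)
    (G' : Cell n e (Finset.image ⇑σ '' 𝒦) → ℝ → ℝ)
    (hG' : ∀ (s : Cell n e 𝒦) (h : s.1.image ⇑σ ∈ Finset.image ⇑σ '' 𝒦)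
      (hc : (s.1.image ⇑σ).card = e + 1), G' ⟨s.1.image ⇑σ, h, hc⟩ = G s) :
    (∀ x : Cell n e 𝒦 → ℝ,
      Tmap σ 𝒦 e (bMap 𝒦 e (fun t => F t (bMapT 𝒦 e x t))) =
        bMap (Finset.image ⇑σ '' 𝒦) e
          (fun t => F' t (bMapT (Finset.image ⇑σ '' 𝒦) e (Tmap σ 𝒦 e x) t))) ∧
    (∀ y : Cell n (e + 1) 𝒦 → ℝ,
      Tmap σ 𝒦 (e + 1) (bMapT 𝒦 e (fun s => G s (bMap 𝒦 e y s))) =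
        bMapT (Finset.image ⇑σ '' 𝒦) e
          (fun s => G' s (bMap (Finset.image ⇑σ '' 𝒦) e (Tmap σ 𝒦 (e + 1) y) s))) := by

  have hsq : ∀ A : Finset (Fin n), ((sgnA σ A : ℝ)) * ((sgnA σ A : ℝ)) = 1 := fun A => by
    rw [← Int.cast_mul, sgnA_sq, Int.cast_one]
  have hFs : ∀ (t : Cell n (e+1) 𝒦) (v : ℝ),
      F t ((sgnA σ t.1 : ℝ) * v) = (sgnA σ t.1 : ℝ) * F t v := by
    intro t v
    rcases sgnA_pm σ t.1 with h | h <;> rw [h] <;> push_cast <;> simp [hFodd t v]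
  have hGs : ∀ (s : Cell n e 𝒦) (v : ℝ),
      G s ((sgnA σ s.1 : ℝ) * v) = (sgnA σ s.1 : ℝ) * G s v := by
    intro s v
    rcases sgnA_pm σ s.1 with h | h <;> rw [h] <;> push_cast <;> simp [hGodd s v]
  have hF'' : ∀ t : Cell n (e+1) 𝒦, F' (cellEquiv σ 𝒦 (e+1) t) = F t := fun t =>
    hF' t ⟨t.1, t.2.1, rfl⟩
      (by rw [Finset.card_image_of_injective _ σ.injective]; exact t.2.2)
  have hG'' : ∀ s : Cell n e 𝒦, G' (cellEquiv σ 𝒦 e s) = G s := fun s =>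
    hG' s ⟨s.1, s.2.1, rfl⟩
      (by rw [Finset.card_image_of_injective _ σ.injective]; exact s.2.2)
  constructor
  · intro x
    funext s
    obtain ⟨S, rfl⟩ := (cellEquiv σ 𝒦 e).surjective s
    have hBT : ∀ t : Cell n (e+1) 𝒦,
        bMapT (Finset.image ⇑σ '' 𝒦) e (Tmap σ 𝒦 e x) (cellEquiv σ 𝒦 (e+1) t)
          = (sgnA σ t.1 : ℝ) * bMapT 𝒦 e x t := by
      intro t
      rw [show bMapT (Finset.image ⇑σ '' 𝒦) e (Tmap σ 𝒦 e x) (cellEquiv σ 𝒦 (e+1) t)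
          = ∑ E : Cell n e (Finset.image ⇑σ '' 𝒦),
              (isign (cellEquiv σ 𝒦 (e+1) t).1 E.1 : ℝ) * Tmap σ 𝒦 e x E from rfl]
      rw [← Equiv.sum_comp (cellEquiv σ 𝒦 e)
        (fun E => (isign (cellEquiv σ 𝒦 (e+1) t).1 E.1 : ℝ) * Tmap σ 𝒦 e x E)]
      rw [bMapT, Finset.mul_sum]
      refine Finset.sum_congr rfl fun s₂ _ => ?_
      rw [Tmap_apply, cellEquiv_coe, cellEquiv_coe,
        isign_image σ t.1 s₂.1 (e+1) t.2.2 s₂.2.2]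
      push_cast
      linear_combination ((sgnA σ t.1 : ℝ) * (isign t.1 s₂.1 : ℝ) * x s₂) * hsq s₂.1
    rw [Tmap_apply]
    rw [show bMap (Finset.image ⇑σ '' 𝒦) e
        (fun T => F' T (bMapT (Finset.image ⇑σ '' 𝒦) e (Tmap σ 𝒦 e x) T))
        (cellEquiv σ 𝒦 e S)
        = ∑ T : Cell n (e+1) (Finset.image ⇑σ '' 𝒦),
            (isign T.1 (cellEquiv σ 𝒦 e S).1 : ℝ)
              * F' T (bMapT (Finset.image ⇑σ '' 𝒦) e (Tmap σ 𝒦 e x) T) from rfl]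
    rw [← Equiv.sum_comp (cellEquiv σ 𝒦 (e+1))
      (fun T => (isign T.1 (cellEquiv σ 𝒦 e S).1 : ℝ)
        * F' T (bMapT (Finset.image ⇑σ '' 𝒦) e (Tmap σ 𝒦 e x) T))]
    rw [bMap, Finset.mul_sum]
    refine Finset.sum_congr rfl fun t _ => ?_
    rw [hBT t, hF'', hFs, cellEquiv_coe, cellEquiv_coe,
      isign_image σ t.1 S.1 (e+1) t.2.2 S.2.2]
    push_cast
    linear_combination (-((sgnA σ S.1 : ℝ) * (isign t.1 S.1 : ℝ)
      * F t (bMapT 𝒦 e x t))) * hsq t.1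
  · intro y
    funext T0
    obtain ⟨T, rfl⟩ := (cellEquiv σ 𝒦 (e+1)).surjective T0
    have hB : ∀ s : Cell n e 𝒦,
        bMap (Finset.image ⇑σ '' 𝒦) e (Tmap σ 𝒦 (e+1) y) (cellEquiv σ 𝒦 e s)
          = (sgnA σ s.1 : ℝ) * bMap 𝒦 e y s := by
      intro s
      rw [show bMap (Finset.image ⇑σ '' 𝒦) e (Tmap σ 𝒦 (e+1) y) (cellEquiv σ 𝒦 e s)
          = ∑ T₂ : Cell n (e+1) (Finset.image ⇑σ '' 𝒦),
              (isign T₂.1 (cellEquiv σ 𝒦 e s).1 : ℝ) * Tmap σ 𝒦 (e+1) y T₂ from rfl]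
      rw [← Equiv.sum_comp (cellEquiv σ 𝒦 (e+1))
        (fun T₂ => (isign T₂.1 (cellEquiv σ 𝒦 e s).1 : ℝ) * Tmap σ 𝒦 (e+1) y T₂)]
      rw [bMap, Finset.mul_sum]
      refine Finset.sum_congr rfl fun t₂ _ => ?_
      rw [Tmap_apply, cellEquiv_coe, cellEquiv_coe,
        isign_image σ t₂.1 s.1 (e+1) t₂.2.2 s.2.2]
      push_cast
      linear_combination ((sgnA σ s.1 : ℝ) * (isign t₂.1 s.1 : ℝ) * y t₂) * hsq t₂.1
    rw [Tmap_apply]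
    rw [show bMapT (Finset.image ⇑σ '' 𝒦) e
        (fun E => G' E (bMap (Finset.image ⇑σ '' 𝒦) e (Tmap σ 𝒦 (e+1) y) E))
        (cellEquiv σ 𝒦 (e+1) T)
        = ∑ E : Cell n e (Finset.image ⇑σ '' 𝒦),
            (isign (cellEquiv σ 𝒦 (e+1) T).1 E.1 : ℝ)
              * G' E (bMap (Finset.image ⇑σ '' 𝒦) e (Tmap σ 𝒦 (e+1) y) E) from rfl]
    rw [← Equiv.sum_comp (cellEquiv σ 𝒦 e)
      (fun E => (isign (cellEquiv σ 𝒦 (e+1) T).1 E.1 : ℝ)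
        * G' E (bMap (Finset.image ⇑σ '' 𝒦) e (Tmap σ 𝒦 (e+1) y) E))]
    rw [bMapT, Finset.mul_sum]
    refine Finset.sum_congr rfl fun s _ => ?_
    rw [hB s, hG'', hGs, cellEquiv_coe, cellEquiv_coe,
      isign_image σ T.1 s.1 (e+1) T.2.2 s.2.2]
    push_cast
    linear_combination (-((sgnA σ T.1 : ℝ) * (isign T.1 s.1 : ℝ)
      * G s (bMap 𝒦 e y s))) * hsq s.1
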